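/- arXiv:2404.08577 — 2 statements merged into one kernel-verified Lean document; each statement's English description precedes it below -/
import Mathlib

section
/- Let H=(S,E(S)) be a finite simple graph and δ ∈ (0,1/2). Then the quantity w(H) := Σ over spanning trees T of H of (1/2+δ)^{-|S|}·(−1)^{|T|}·∫_{[0,1/2+δ]^S} ∏_{uv∈T} 1[x_u+x_v>1] · ∏_{st∈E_T} 1[x_s+x_t≤1] dx does not depend on the total order on the edges of H that is used to define the broken edge sets E_T. -/
/-!
Write `x_e = x_u + x_v` for `e = uv`. Expanding `∏_{e ∈ E_T} 1[x_e ≤ 1] = ∏_{e ∈ E_T} (1 - 1[x_e > 1])`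
turns the integrand of `w(H)` into `∑_T ∑_{B ⊆ E_T} (-1)^{|T ∪ B|} ∏_{e ∈ T ∪ B} 1[x_e > 1]`.
By Whitney's broken-circuit argument, `(T, B) ↦ T ∪ B` is a bijection onto the edge sets `A` of
connected spanning subgraphs of `H`, inverted by `A ↦ (K, A \ K)` with `K` the Kruskal spanning tree
of `A` for the edge order. So the integrand is `∑_A (-1)^{|A|} ∏_{e ∈ A} 1[x_e > 1]`, in which the
order no longer appears.
-/

open MeasureTheory

attribute [local instance] Classical.propDecidable

namespace VolumePaper

variable {V : Type} [Fintype V]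

/-- The set of endpoints of a finite set of (potential) edges. -/
noncomputable def verts (T : Finset (Sym2 V)) : Finset V :=
  Finset.univ.filter (fun v => ∃ e ∈ T, v ∈ e)

/-- `T` forms a tree (necessarily with at least one edge): the graph on the set of
endpoints of `T` whose edges are the members of `T` is a tree. -/
def IsTreeSet (T : Finset (Sym2 V)) : Prop :=
  (SimpleGraph.induce (↑(verts T) : Set V)
    (SimpleGraph.fromEdgeSet (↑T : Set (Sym2 V)))).IsTree

/-- The broken edges of `T` relative to the induced subgraph `G[S]` and a fixed
total edge order (given by an injective function `ord` into `ℕ`): edges `e` of `G[S]`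
not in `T` such that `e` is the largest edge of a (the) cycle of `T ∪ {e}`. -/
noncomputable def brokenEdgesOn (G : SimpleGraph V) (ord : Sym2 V → ℕ) (S : Finset V)
    (T : Finset (Sym2 V)) : Finset (Sym2 V) :=
  Finset.univ.filter (fun e =>
    e ∈ G.edgeSet ∧ (∀ v ∈ e, v ∈ S) ∧ e ∉ T ∧
    ∃ (u : V) (c : (SimpleGraph.fromEdgeSet (insert e (↑T : Set (Sym2 V)))).Walk u u),
      c.IsCycle ∧ e ∈ c.edges ∧ ∀ e' ∈ c.edges, ord e' ≤ ord e)

/-- The broken edges of a tree `T`, relative to the graph induced by `G` on the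
endpoints of `T`. -/
noncomputable def brokenEdges (G : SimpleGraph V) (ord : Sym2 V → ℕ)
    (T : Finset (Sym2 V)) : Finset (Sym2 V) :=
  brokenEdgesOn G ord (verts T) T

/-- Indicator (as a real number) of the event `x_u + x_v > 1` on an unordered pair. -/
noncomputable def indGt (x : V → ℝ) : Sym2 V → ℝ :=
  Sym2.lift ⟨fun u v => if 1 < x u + x v then 1 else 0, by intro a b; dsimp only; rw [add_comm]⟩

/-- Indicator (as a real number) of the event `x_u + x_v ≤ 1` on an unordered pair. -/
noncomputable def indLe (x : V → ℝ) : Sym2 V → ℝ :=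
  Sym2.lift ⟨fun u v => if x u + x v ≤ 1 then 1 else 0, by intro a b; dsimp only; rw [add_comm]⟩

/-- Extension of a function on a finite subset of coordinates by `0`. -/
noncomputable def extFun (S : Finset V) (x : {v // v ∈ S} → ℝ) : V → ℝ :=
  fun v => if h : v ∈ S then x ⟨v, h⟩ else 0

/-- The integral `∫_{[0,1/2+δ]^S} ∏_{uv ∈ T} 1[x_u+x_v>1] ∏_{st ∈ E_T} 1[x_s+x_t ≤ 1] dμ`,
where `E_T` is the set of broken edges of `T` relative to `G[S]`. -/
noncomputable def treeIntegral (G : SimpleGraph V) (ord : Sym2 V → ℕ) (δ : ℝ)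
    (S : Finset V) (T : Finset (Sym2 V)) : ℝ :=
  ∫ x : {v // v ∈ S} → ℝ in Set.univ.pi (fun _ => Set.Icc (0:ℝ) (1/2 + δ)),
    (∏ e ∈ T, indGt (extFun S x) e) * ∏ e ∈ brokenEdgesOn G ord S T, indLe (extFun S x) e

/-- The weight `w_T` of a tree `T` of edges of `G`. -/
noncomputable def treeWeight (G : SimpleGraph V) (ord : Sym2 V → ℕ) (δ : ℝ)
    (T : Finset (Sym2 V)) : ℝ :=
  (1/2 + δ) ^ (-((verts T).card : ℤ)) * (-1 : ℝ) ^ T.card *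
    treeIntegral G ord δ (verts T) T

/-- The connected components (each having at least one edge) of a set `F` of edges. -/
noncomputable def comps (F : Finset (Sym2 V)) : Finset (Finset (Sym2 V)) :=
  F.image (fun e => F.filter (fun e' => ∃ u ∈ e, ∃ v ∈ e',
    (SimpleGraph.fromEdgeSet (↑F : Set (Sym2 V))).Reachable u v))

/-- `F` is a forest of edges of `G` all of whose endpoints lie in `S`. -/
def IsForestOn (G : SimpleGraph V) (S : Finset V) (F : Finset (Sym2 V)) : Prop :=
  (↑F : Set (Sym2 V)) ⊆ G.edgeSet ∧ (∀ e ∈ F, ∀ v ∈ e, v ∈ S) ∧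
    (SimpleGraph.fromEdgeSet (↑F : Set (Sym2 V))).IsAcyclic

/-- The polynomial `p_{G[S],δ}(x) = ∑_{F forest of G[S]} (∏_{T comp. of F} w_T) x^{|F|}`
(with weights computed in `G`). -/
noncomputable def pPolyOn (G : SimpleGraph V) (ord : Sym2 V → ℕ) (δ : ℝ) (S : Finset V) :
    Polynomial ℂ :=
  ∑ F ∈ Finset.univ.filter (fun F => IsForestOn G S F),
    Polynomial.monomial F.card (((∏ T ∈ comps F, treeWeight G ord δ T : ℝ)) : ℂ)

/-- The polynomial `p_{G,δ}`. -/
noncomputable def pPoly (G : SimpleGraph V) (ord : Sym2 V → ℕ) (δ : ℝ) : Polynomial ℂ :=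
  pPolyOn G ord δ Finset.univ

/-- `T` is (the edge set of) a spanning tree of the induced subgraph `G[S]`. -/
def IsSpanningTreeOn (G : SimpleGraph V) (S : Finset V) (T : Finset (Sym2 V)) : Prop :=
  (↑T : Set (Sym2 V)) ⊆ G.edgeSet ∧ (∀ e ∈ T, ∀ v ∈ e, v ∈ S) ∧
    (SimpleGraph.induce (↑S : Set V)
      (SimpleGraph.fromEdgeSet (↑T : Set (Sym2 V)))).IsTree

/-- The weight `w(G[S])` of the subgraph of `G` induced by `S`. -/
noncomputable def indWeight (G : SimpleGraph V) (ord : Sym2 V → ℕ) (δ : ℝ)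
    (S : Finset V) : ℝ :=
  ∑ T ∈ Finset.univ.filter (fun T => IsSpanningTreeOn G S T),
    (1/2 + δ) ^ (-(S.card : ℤ)) * (-1 : ℝ) ^ T.card * treeIntegral G ord δ S T

/-- `G` has maximum degree at most `Δ`. -/
def maxDegreeLE (G : SimpleGraph V) (Δ : ℝ) : Prop :=
  ∀ v : V, ((Finset.univ.filter (fun u => G.Adj v u)).card : ℝ) ≤ Δ

/-- The truncated relaxed independent set polytope `P_{G,δ}`. -/
def polytope (G : SimpleGraph V) (δ : ℝ) : Set (V → ℝ) :=
  {x | (∀ v, x v ∈ Set.Icc (0:ℝ) (1/2 + δ)) ∧ ∀ ⦃u v⦄, G.Adj u v → x u + x v ≤ 1}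

end VolumePaper

namespace VolumePaper

open SimpleGraph Finset Function

section Joins

variable {V : Type} {s t : Set (Sym2 V)} {e : Sym2 V}

def Joins (s : Set (Sym2 V)) : Sym2 V → Prop :=
  Sym2.lift ⟨fun u v => (fromEdgeSet s).Reachable u v, fun _ _ => propext reachable_comm⟩

@[simp] lemma joins_mk {u v : V} : Joins s s(u, v) ↔ (fromEdgeSet s).Reachable u v := Iff.rfl

lemma joins_of_mem (he : e ∈ s) : Joins s e := by
  induction e using Sym2.ind with | _ u v =>
  by_cases huv : u = v
  · subst huv; exact Reachable.refl _
  · exact Adj.reachable ((fromEdgeSet_adj _).2 ⟨he, huv⟩)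

lemma Joins.mono (hst : s ⊆ t) (h : Joins s e) : Joins t e := by
  induction e using Sym2.ind with | _ u v => exact Reachable.mono (fromEdgeSet_mono hst) h

lemma Joins.of_forall_joins (hst : ∀ e' ∈ s, Joins t e') (h : Joins s e) : Joins t e := by
  induction e using Sym2.ind with | _ u v =>
  rw [joins_mk, reachable_iff_reflTransGen] at h ⊢
  exact h.lift' id fun a b hab =>
    (reachable_iff_reflTransGen a b).1 (hst _ ((fromEdgeSet_adj _).1 hab).1)

lemma not_joins_sdiff_of_isAcyclic (hs : (fromEdgeSet s).IsAcyclic) (he : e ∈ s)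
    (hd : ¬ e.IsDiag) : ¬ Joins (s \ {e}) e := by
  induction e using Sym2.ind with | _ u v =>
  have hadj : (fromEdgeSet s).Adj u v := (fromEdgeSet_adj _).2 ⟨he, by simpa using hd⟩
  simpa [isBridge_iff] using isAcyclic_iff_forall_adj_isBridge.1 hs hadj

variable {ord : Sym2 V → ℕ}

lemma exists_isCycle_max_iff_joins_lt (hinj : Injective ord) (hd : ¬ e.IsDiag) :
    (∃ (u : V) (c : (fromEdgeSet s).Walk u u),
        c.IsCycle ∧ e ∈ c.edges ∧ ∀ e' ∈ c.edges, ord e' ≤ ord e) ↔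
      e ∈ s ∧ Joins {e' ∈ s | ord e' < ord e} e := by
  induction e using Sym2.ind with | _ x y =>
  set G := fromEdgeSet {e' ∈ s | ord e' ≤ ord s(x, y)}
  have hdel : G.deleteEdges {s(x, y)} = fromEdgeSet {e' ∈ s | ord e' < ord s(x, y)} := by
    rw [deleteEdges_fromEdgeSet]
    congr 1
    ext e'
    simp only [Set.mem_sdiff, Set.mem_ofPred_eq, Set.mem_singleton_iff, lt_iff_le_and_ne,
      hinj.ne_iff]
    tauto
  have hxy : x ≠ y := by simpa using hd
  have hadj : G.Adj x y ↔ s(x, y) ∈ s := by simp [G, hxy]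
  rw [joins_mk, ← hdel, ← hadj, adj_and_reachable_delete_edges_iff_exists_cycle]
  constructor
  · rintro ⟨u, c, hc, he, hmax⟩
    have hcG : ∀ e' ∈ c.edges, e' ∈ G.edgeSet := fun e' h' => by
      have := c.edges_subset_edgeSet h'
      simp_all [G]
    exact ⟨u, c.transfer G hcG, hc.transfer hcG, by simpa using he⟩
  · rintro ⟨u, c, hc, he⟩
    have hGs : G ≤ fromEdgeSet s := fromEdgeSet_mono (Set.sep_subset _ _)
    refine ⟨u, c.mapLe hGs, hc.mapLe hGs, by simpa using he, fun e' h' => ?_⟩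
    have := c.edges_subset_edgeSet (by simpa using h')
    simp only [G, edgeSet_fromEdgeSet] at this
    exact this.1.2

end Joins

section Kruskal

variable {V : Type} {ord : Sym2 V → ℕ} {A B T : Finset (Sym2 V)} {e : Sym2 V}

/-- Kruskal's spanning forest of `A`. Rejecting an edge when smaller edges of `A` join its
endpoints is the same as rejecting it when the smaller edges already kept do
(`joins_kruskal_le`). -/
noncomputable def kruskal (ord : Sym2 V → ℕ) (A : Finset (Sym2 V)) : Finset (Sym2 V) :=
  A.filter fun e => ¬ Joins {e' ∈ (A : Set (Sym2 V)) | ord e' < ord e} e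

lemma kruskal_subset : kruskal ord A ⊆ A := filter_subset _ _

lemma joins_kruskal_le (he : e ∈ A) :
    Joins {e' ∈ (kruskal ord A : Set (Sym2 V)) | ord e' ≤ ord e} e := by
  induction hn : ord e using Nat.strong_induction_on generalizing e with
  | _ n ih =>
  subst hn
  by_cases hk : e ∈ kruskal ord A
  · exact joins_of_mem ⟨hk, le_rfl⟩
  · have hlow : Joins {e' ∈ (A : Set (Sym2 V)) | ord e' < ord e} e := by
      simpa [kruskal, he] using hk
    refine hlow.of_forall_joins fun e' he' => (ih _ he'.2 he'.1 rfl).mono ?_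
    exact fun f hf => ⟨hf.1, hf.2.trans he'.2.le⟩

lemma joins_kruskal (he : e ∈ A) : Joins (kruskal ord A) e :=
  (joins_kruskal_le he).mono (Set.sep_subset _ _)

lemma connected_kruskal (hA : (fromEdgeSet (A : Set (Sym2 V))).Connected) :
    (fromEdgeSet (kruskal ord A : Set (Sym2 V))).Connected :=
  (connected_iff _).2 ⟨fun u v =>
    (joins_mk.2 (hA.preconnected u v)).of_forall_joins fun _ he => joins_kruskal he,
    hA.nonempty⟩

lemma joins_lt_of_mem_sdiff_kruskal (hinj : Injective ord) (he : e ∈ A \ kruskal ord A) :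
    Joins {e' ∈ (kruskal ord A : Set (Sym2 V)) | ord e' < ord e} e :=
  (joins_kruskal_le (mem_sdiff.1 he).1).mono fun _ hf =>
    ⟨hf.1, hf.2.lt_of_ne fun h => (mem_sdiff.1 he).2 (hinj h ▸ hf.1)⟩

/-- The largest edge of a cycle of `kruskal ord A` would have been rejected. -/
lemma isAcyclic_kruskal (hinj : Injective ord) :
    (fromEdgeSet (kruskal ord A : Set (Sym2 V))).IsAcyclic := by
  intro v c hc
  have hne : c.edges.toFinset.Nonempty :=
    List.toFinset_nonempty_iff _ |>.2 (Walk.edges_eq_nil.not.2 hc.not_nil)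
  obtain ⟨e, he, hmax⟩ := c.edges.toFinset.exists_max_image ord hne
  rw [List.mem_toFinset] at he
  have heK := c.edges_subset_edgeSet he
  rw [edgeSet_fromEdgeSet] at heK
  obtain ⟨heK, hjoin⟩ := (exists_isCycle_max_iff_joins_lt hinj heK.2).1
    ⟨v, c, hc, he, fun e' h' => hmax e' (List.mem_toFinset.2 h')⟩
  exact (mem_filter.1 heK).2 (hjoin.mono fun f hf => ⟨kruskal_subset hf.1, hf.2⟩)

lemma kruskal_union_eq (hT : (fromEdgeSet (T : Set (Sym2 V))).IsAcyclic)
    (hTd : ∀ e ∈ T, ¬ e.IsDiag)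
    (hB : ∀ b ∈ B, Joins {e' ∈ (T : Set (Sym2 V)) | ord e' < ord b} b) :
    kruskal ord (T ∪ B) = T := by
  ext e
  constructor
  · intro hk
    obtain ⟨he, hnot⟩ := mem_filter.1 hk
    rcases mem_union.1 he with heT | heB
    · exact heT
    · exact (hnot ((hB e heB).mono fun _ hf => ⟨mem_union_left _ hf.1, hf.2⟩)).elim
  · intro heT
    refine mem_filter.2 ⟨mem_union_left _ heT, fun hj =>
      not_joins_sdiff_of_isAcyclic hT heT (hTd e heT) ?_⟩
    refine hj.of_forall_joins fun f hf => ?_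
    obtain ⟨hf, hlt⟩ := hf
    rcases mem_union.1 hf with hfT | hfB
    · exact joins_of_mem ⟨hfT, ne_of_apply_ne ord hlt.ne⟩
    · exact (hB f hfB).mono fun g hg => ⟨hg.1, ne_of_apply_ne ord (hg.2.trans hlt).ne⟩

end Kruskal

section SpanningTrees

variable {V : Type} [Fintype V] {H : SimpleGraph V} {ord : Sym2 V → ℕ} {A T : Finset (Sym2 V)}
  {e : Sym2 V}

lemma mem_brokenEdgesOn_univ_iff (hinj : Injective ord) :
    e ∈ brokenEdgesOn H ord univ T ↔
      e ∈ H.edgeSet ∧ e ∉ T ∧ Joins {e' ∈ (T : Set (Sym2 V)) | ord e' < ord e} e := by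
  simp only [brokenEdgesOn, mem_filter, mem_univ, true_and, implies_true]
  refine and_congr_right fun heH => and_congr_right fun _ => ?_
  have hlt : {e' ∈ insert e (T : Set (Sym2 V)) | ord e' < ord e} =
      {e' ∈ (T : Set (Sym2 V)) | ord e' < ord e} :=
    Set.ext fun _ => ⟨fun h => ⟨h.1.resolve_left (ne_of_apply_ne ord h.2.ne), h.2⟩,
      fun h => ⟨Or.inr h.1, h.2⟩⟩
  rw [exists_isCycle_max_iff_joins_lt hinj (H.not_isDiag_of_mem_edgeSet heH), hlt]
  exact and_iff_right (Set.mem_insert _ _)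

lemma isSpanningTreeOn_univ_iff :
    IsSpanningTreeOn H univ T ↔
      ↑T ⊆ H.edgeSet ∧ (fromEdgeSet (T : Set (Sym2 V))).IsTree := by
  rw [IsSpanningTreeOn, coe_univ, (induceUnivIso _).isTree_iff]
  simp

noncomputable def connectedSpanningEdgeSets (H : SimpleGraph V) : Finset (Finset (Sym2 V)) :=
  univ.filter fun A => ↑A ⊆ H.edgeSet ∧ (fromEdgeSet (A : Set (Sym2 V))).Connected

lemma isSpanningTreeOn_kruskal (hinj : Injective ord) (hA : A ∈ connectedSpanningEdgeSets H) :
    IsSpanningTreeOn H univ (kruskal ord A) := by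
  obtain ⟨hAH, hAc⟩ := by simpa [connectedSpanningEdgeSets] using hA
  exact isSpanningTreeOn_univ_iff.2
    ⟨(coe_subset.2 kruskal_subset).trans hAH, connected_kruskal hAc, isAcyclic_kruskal hinj⟩

lemma filter_kruskal_eq_image (hinj : Injective ord) (hT : IsSpanningTreeOn H univ T) :
    {A ∈ connectedSpanningEdgeSets H | kruskal ord A = T} =
      (brokenEdgesOn H ord univ T).powerset.image (T ∪ ·) := by
  obtain ⟨hTH, hTc, hTa⟩ := isSpanningTreeOn_univ_iff.1 hT
  ext A
  simp only [connectedSpanningEdgeSets, mem_filter, mem_univ, true_and, mem_image, mem_powerset]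
  constructor
  · rintro ⟨⟨hAH, -⟩, rfl⟩
    refine ⟨A \ kruskal ord A, fun e he => ?_, union_sdiff_of_subset kruskal_subset⟩
    exact (mem_brokenEdgesOn_univ_iff hinj).2
      ⟨hAH (mem_sdiff.1 he).1, (mem_sdiff.1 he).2, joins_lt_of_mem_sdiff_kruskal hinj he⟩
  · rintro ⟨B, hB, rfl⟩
    have hB' (b) (hb : b ∈ B) := (mem_brokenEdgesOn_univ_iff hinj).1 (hB hb)
    refine ⟨⟨?_, hTc.mono (fromEdgeSet_mono (coe_subset.2 subset_union_left))⟩, ?_⟩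
    · rw [coe_union]
      exact Set.union_subset hTH fun b hb => (hB' b hb).1
    · exact kruskal_union_eq hTa (fun e he => H.not_isDiag_of_mem_edgeSet (hTH he))
        fun b hb => (hB' b hb).2.2

lemma prod_one_sub_eq_sum_powerset {ι R : Type*} [CommRing R] (s : Finset ι) (f : ι → R) :
    ∏ i ∈ s, (1 - f i) = ∑ t ∈ s.powerset, (-1) ^ t.card * ∏ i ∈ t, f i := by
  simp only [sub_eq_add_neg, prod_one_add, prod_neg]

/-- Fibre the connected spanning subgraphs by their Kruskal tree. -/
theorem sum_spanningTrees_brokenEdgesOn {R : Type*} [CommRing R] (hinj : Injective ord)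
    (f : Sym2 V → R) :
    ∑ T ∈ univ.filter (IsSpanningTreeOn H univ),
        (-1) ^ T.card * ((∏ e ∈ T, f e) * ∏ e ∈ brokenEdgesOn H ord univ T, (1 - f e)) =
      ∑ A ∈ connectedSpanningEdgeSets H, (-1) ^ A.card * ∏ e ∈ A, f e := by
  rw [← sum_fiberwise_of_maps_to (g := kruskal ord)
    fun A hA => mem_filter.2 ⟨mem_univ _, isSpanningTreeOn_kruskal hinj hA⟩]
  refine sum_congr rfl fun T hT => ?_
  have hdisj (B) (hB : B ∈ (brokenEdgesOn H ord univ T).powerset) : Disjoint T B :=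
    disjoint_right.2 fun _ hb =>
      ((mem_brokenEdgesOn_univ_iff hinj).1 (mem_powerset.1 hB hb)).2.1
  have hinjOn : Set.InjOn (T ∪ ·) (brokenEdgesOn H ord univ T).powerset := by
    intro B₁ hB₁ B₂ hB₂ h
    simpa only [union_sdiff_cancel_left (hdisj _ hB₁), union_sdiff_cancel_left (hdisj _ hB₂)]
      using congrArg (· \ T) h
  rw [filter_kruskal_eq_image hinj (mem_filter.1 hT).2, sum_image hinjOn,
    prod_one_sub_eq_sum_powerset, mul_sum, mul_sum]
  refine sum_congr rfl fun B hB => ?_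
  rw [card_union_of_disjoint (hdisj B hB), prod_union (hdisj B hB), pow_add]
  ring

end SpanningTrees

section Integral

variable {V : Type}

lemma indLe_eq_one_sub_indGt (x : V → ℝ) (e : Sym2 V) : indLe x e = 1 - indGt x e := by
  induction e using Sym2.ind with | _ u v =>
  simp only [indLe, indGt, Sym2.lift_mk]
  split_ifs <;> linarith

lemma abs_indGt_le_one (x : V → ℝ) (e : Sym2 V) : |indGt x e| ≤ 1 := by
  induction e using Sym2.ind with | _ u v =>
  simp only [indGt, Sym2.lift_mk]
  split_ifs <;> simp

lemma abs_indLe_le_one (x : V → ℝ) (e : Sym2 V) : |indLe x e| ≤ 1 := by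
  induction e using Sym2.ind with | _ u v =>
  simp only [indLe, Sym2.lift_mk]
  split_ifs <;> simp

lemma measurable_indGt (e : Sym2 V) : Measurable fun x : V → ℝ => indGt x e := by
  induction e using Sym2.ind with | _ u v =>
  exact Measurable.ite (measurableSet_lt measurable_const
    ((measurable_pi_apply u).add (measurable_pi_apply v))) measurable_const measurable_const

lemma measurable_indLe (e : Sym2 V) : Measurable fun x : V → ℝ => indLe x e := by
  simpa only [indLe_eq_one_sub_indGt] using (measurable_indGt e).const_sub 1

lemma measurable_extFun (S : Finset V) : Measurable (extFun S) :=
  measurable_pi_lambda _ fun v => by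
    by_cases hv : v ∈ S
    · simpa only [extFun, hv, dif_pos] using measurable_pi_apply _
    · simp only [extFun, hv, dif_neg, not_false_eq_true, measurable_const]

lemma integrableOn_prod_indGt_mul_prod_indLe (S : Finset V) (T B : Finset (Sym2 V)) (a : ℝ) :
    IntegrableOn
      (fun x => (∏ e ∈ T, indGt (extFun S x) e) * ∏ e ∈ B, indLe (extFun S x) e)
      (Set.univ.pi fun _ => Set.Icc 0 a) := by
  refine Measure.integrableOn_of_bounded (M := 1)
    (isCompact_univ_pi fun _ => isCompact_Icc).measure_lt_top.ne ?_ (ae_of_all _ fun x => ?_)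
  · exact (((measurable_prod T fun e _ => measurable_indGt e).mul
      (measurable_prod B fun e _ => measurable_indLe e)).comp
        (measurable_extFun S)).aestronglyMeasurable
  · rw [norm_mul, Real.norm_eq_abs, Real.norm_eq_abs, abs_prod, abs_prod]
    exact mul_le_one₀ (prod_le_one (fun _ _ => abs_nonneg _) fun e _ => abs_indGt_le_one _ e)
      (prod_nonneg fun _ _ => abs_nonneg _)
      (prod_le_one (fun _ _ => abs_nonneg _) fun e _ => abs_indLe_le_one _ e)

lemma indWeight_univ_eq [Fintype V] {ord : Sym2 V → ℕ} (hinj : Injective ord)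
    (H : SimpleGraph V) (δ : ℝ) :
    indWeight H ord δ univ = (1 / 2 + δ) ^ (-((univ : Finset V).card : ℤ)) *
      ∫ x in Set.univ.pi fun _ => Set.Icc (0 : ℝ) (1 / 2 + δ),
        ∑ A ∈ connectedSpanningEdgeSets H,
          (-1) ^ A.card * ∏ e ∈ A, indGt (extFun univ x) e := by
  simp only [indWeight, mul_assoc, ← mul_sum]
  congr 1
  simp only [treeIntegral, ← integral_const_mul]
  rw [← integral_finsetSum _ fun T _ =>
    (integrableOn_prod_indGt_mul_prod_indLe _ _ _ _).const_mul _]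
  congr 1 with x
  simp only [indLe_eq_one_sub_indGt]
  exact sum_spanningTrees_brokenEdgesOn hinj _

end Integral

theorem statement7_general (V : Type) [Fintype V] (H : SimpleGraph V) (δ : ℝ)
    (ord₁ ord₂ : Sym2 V → ℕ)
    (h₁ : Function.Injective ord₁) (h₂ : Function.Injective ord₂) :
    indWeight H ord₁ δ Finset.univ = indWeight H ord₂ δ Finset.univ := by
  rw [indWeight_univ_eq h₁, indWeight_univ_eq h₂]

/-- The weight `w(H)` of a finite simple graph `H` does not depend on
the total order of the edges used to define the broken edge sets `E_T`. -/
theorem statement7 (V : Type) [Fintype V] (H : SimpleGraph V) (δ : ℝ)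
    (hδ : δ ∈ Set.Ioo (0:ℝ) (1/2)) (ord₁ ord₂ : Sym2 V → ℕ)
    (h₁ : Function.Injective ord₁) (h₂ : Function.Injective ord₂) :
    indWeight H ord₁ δ Finset.univ = indWeight H ord₂ δ Finset.univ :=
  statement7_general V H δ ord₁ ord₂ h₁ h₂

end VolumePaper
end

section
/- Let G=(V,E) be a finite simple graph with a fixed total order on E, let δ ∈ (0,1/2), and let v ∈ V. Then for every complex number x, p_{G,δ}(x) = p_{G−v,δ}(x) + Σ over subsets T ⊆ E forming a tree with at least one edge whose vertex set contains v of x^{|T|} · w_T · p_{G∖V(T),δ}(x), where G−v and G∖V(T) denote the subgraphs induced on V∖{v} and V∖V(T) respectively. -/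
/-!
Split the forests of `G` according to whether they cover `v`. Those that do not are exactly the
forests of `G - v`. A forest `F` covering `v` decomposes uniquely as `T ∪ F'`, where `T` is the
component of `F` through `v` (a tree containing `v`) and `F'` is a forest of `G ∖ V(T)`; the
components of `F` are `T` together with those of `F'`, so the summand of `F` factors as
`x^{|T|} w_T` times the summand of `F'`.
-/

open MeasureTheory

attribute [local instance] Classical.propDecidable

namespace SimpleGraph

variable {V : Type*} {G : SimpleGraph V} {s : Set V}

lemma isAcyclic_of_induce_of_support_subset (hs : G.support ⊆ s) (h : (G.induce s).IsAcyclic) :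
    G.IsAcyclic := by
  intro u c hc
  have hcs : ∀ x ∈ c.support, x ∈ s := fun x hx =>
    hs (mem_support_of_mem_walk_support c hc.not_nil hx)
  refine h (c.induce s hcs) ((Walk.isCycle_map_iff_of_injective
    (f := (Embedding.induce s).toHom) Subtype.val_injective).1 ?_)
  rwa [Walk.map_induce]

lemma Reachable.induce_of_support_subset (hs : G.support ⊆ s) {u w : V} (hu : u ∈ s)
    (hw : w ∈ s) (h : G.Reachable u w) : (G.induce s).Reachable ⟨u, hu⟩ ⟨w, hw⟩ := by
  obtain ⟨p⟩ := h
  have hps : ∀ x ∈ p.support, x ∈ s := by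
    by_cases hnil : p.Nil
    · simpa [Walk.nil_iff_support_eq.1 hnil] using hu
    · exact fun x hx => hs (mem_support_of_mem_walk_support p hnil hx)
  exact ⟨p.induce s hps⟩

end SimpleGraph

namespace VolumePaper

open SimpleGraph Finset

variable {V : Type} [Fintype V]

lemma mem_verts {T : Finset (Sym2 V)} {v : V} : v ∈ verts T ↔ ∃ e ∈ T, v ∈ e := by
  simp [verts]

lemma mem_verts_of_mem {T : Finset (Sym2 V)} {e : Sym2 V} (he : e ∈ T) {v : V} (hv : v ∈ e) :
    v ∈ verts T :=
  mem_verts.2 ⟨e, he, hv⟩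

lemma verts_mono {A B : Finset (Sym2 V)} (h : A ⊆ B) : verts A ⊆ verts B := by
  intro v hv
  obtain ⟨e, he, hve⟩ := mem_verts.1 hv
  exact mem_verts_of_mem (h he) hve

lemma verts_union (A B : Finset (Sym2 V)) : verts (A ∪ B) = verts A ∪ verts B := by
  ext
  simp only [mem_verts, mem_union, or_and_right, exists_or]

lemma disjoint_of_disjoint_verts {A B : Finset (Sym2 V)} (hd : Disjoint (verts A) (verts B)) :
    Disjoint A B :=
  disjoint_left.2 fun e hA hB =>
    disjoint_left.1 hd (mem_verts_of_mem hA e.out_fst_mem) (mem_verts_of_mem hB e.out_fst_mem)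

lemma support_fromEdgeSet_subset_verts (F : Finset (Sym2 V)) :
    (fromEdgeSet (F : Set (Sym2 V))).support ⊆ verts F := by
  rintro u ⟨w, huw⟩
  exact mem_verts_of_mem ((fromEdgeSet_adj _).1 huw).1 (Sym2.mem_mk_left u w)

lemma mem_verts_of_reachable {F : Finset (Sym2 V)} {u w : V} (hu : u ∈ verts F)
    (h : (fromEdgeSet (F : Set (Sym2 V))).Reachable u w) : w ∈ verts F := by
  by_cases huw : w = u
  · exact huw ▸ hu
  · exact support_fromEdgeSet_subset_verts F (mem_support_of_reachable huw h.symm)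

lemma IsTreeSet.nonempty {T : Finset (Sym2 V)} (hT : IsTreeSet T) : T.Nonempty := by
  obtain ⟨⟨v, hv⟩⟩ := hT.connected.nonempty
  obtain ⟨e, he, -⟩ := mem_verts.1 hv
  exact ⟨e, he⟩

lemma IsTreeSet.reachable {T : Finset (Sym2 V)} (hT : IsTreeSet T) {a b : V}
    (ha : a ∈ verts T) (hb : b ∈ verts T) : (fromEdgeSet (T : Set (Sym2 V))).Reachable a b :=
  (hT.connected.preconnected ⟨a, ha⟩ ⟨b, hb⟩).map (Embedding.induce _).toHom

lemma IsTreeSet.isAcyclic {T : Finset (Sym2 V)} (hT : IsTreeSet T) :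
    (fromEdgeSet (T : Set (Sym2 V))).IsAcyclic :=
  isAcyclic_of_induce_of_support_subset (support_fromEdgeSet_subset_verts T)
    (IsTree.isAcyclic hT)

lemma isTreeSet_of_reachable {T : Finset (Sym2 V)} {v : V} (hv : v ∈ verts T)
    (hreach : ∀ a ∈ verts T, ∀ b ∈ verts T, (fromEdgeSet (T : Set (Sym2 V))).Reachable a b)
    (hac : (fromEdgeSet (T : Set (Sym2 V))).IsAcyclic) : IsTreeSet T := by
  refine ⟨(connected_iff _).2 ⟨?_, ⟨⟨v, hv⟩⟩⟩, hac.induce _⟩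
  rintro ⟨a, ha⟩ ⟨b, hb⟩
  exact (hreach a ha b hb).induce_of_support_subset (support_fromEdgeSet_subset_verts T) ha hb

section DisjointUnion

variable {A B : Finset (Sym2 V)}

lemma edges_mem_edgeSet_of_disjoint_verts {F : Finset (Sym2 V)} (hF : F ⊆ A ∪ B)
    (hd : Disjoint (verts A) (verts B)) {u w : V}
    (p : (fromEdgeSet (F : Set (Sym2 V))).Walk u w) (hu : u ∈ verts A) :
    ∀ e ∈ p.edges, e ∈ (fromEdgeSet (A : Set (Sym2 V))).edgeSet := by
  induction p with
  | nil => simp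
  | @cons a b c h p ih =>
    have hab : s(a, b) ∈ A := by
      rcases mem_union.1 (hF ((fromEdgeSet_adj _).1 h).1) with hA | hB
      · exact hA
      · exact absurd (mem_verts_of_mem hB (Sym2.mem_mk_left a b)) (disjoint_left.1 hd hu)
    simp only [Walk.edges_cons, List.forall_mem_cons]
    exact ⟨(fromEdgeSet_adj _).2 ⟨hab, h.ne⟩,
      ih (mem_verts_of_mem hab (Sym2.mem_mk_right a b))⟩

lemma reachable_of_disjoint_verts (hd : Disjoint (verts A) (verts B)) {u w : V}
    (h : (fromEdgeSet ((A ∪ B : Finset (Sym2 V)) : Set (Sym2 V))).Reachable u w)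
    (hu : u ∈ verts A) : (fromEdgeSet (A : Set (Sym2 V))).Reachable u w :=
  h.elim fun p => ⟨p.transfer _ (edges_mem_edgeSet_of_disjoint_verts subset_rfl hd p hu)⟩

lemma isAcyclic_union (hd : Disjoint (verts A) (verts B))
    (hA : (fromEdgeSet (A : Set (Sym2 V))).IsAcyclic)
    (hB : (fromEdgeSet (B : Set (Sym2 V))).IsAcyclic) :
    (fromEdgeSet ((A ∪ B : Finset (Sym2 V)) : Set (Sym2 V))).IsAcyclic := by
  intro u c hc
  have hu : u ∈ verts A ∪ verts B := verts_union A B ▸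
    support_fromEdgeSet_subset_verts _ (mem_support_of_mem_walk_support c hc.not_nil
      c.start_mem_support)
  rcases mem_union.1 hu with hu | hu
  · exact hA _ (hc.transfer (edges_mem_edgeSet_of_disjoint_verts subset_rfl hd c hu))
  · exact hB _ (hc.transfer (edges_mem_edgeSet_of_disjoint_verts
      (union_comm A B).subset hd.symm c hu))

lemma filter_reachable_union (hd : Disjoint (verts A) (verts B)) {e : Sym2 V} (he : e ∈ A) :
    (A ∪ B).filter (fun e' => ∃ u ∈ e, ∃ w ∈ e',
        (fromEdgeSet ((A ∪ B : Finset (Sym2 V)) : Set (Sym2 V))).Reachable u w) =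
      A.filter (fun e' => ∃ u ∈ e, ∃ w ∈ e',
        (fromEdgeSet (A : Set (Sym2 V))).Reachable u w) := by
  ext e'
  simp only [mem_filter, mem_union]
  constructor
  · rintro ⟨hAB, u, hue, w, hwe', hr⟩
    have hrA := reachable_of_disjoint_verts hd hr (mem_verts_of_mem he hue)
    refine ⟨hAB.resolve_right fun hB => ?_, u, hue, w, hwe', hrA⟩
    exact disjoint_left.1 hd (mem_verts_of_reachable (mem_verts_of_mem he hue) hrA)
      (mem_verts_of_mem hB hwe')
  · rintro ⟨hA, u, hue, w, hwe', hr⟩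
    exact ⟨Or.inl hA, u, hue, w, hwe', hr.mono (fromEdgeSet_mono (by simp))⟩

lemma comps_union (hd : Disjoint (verts A) (verts B)) : comps (A ∪ B) = comps A ∪ comps B := by
  unfold comps
  rw [image_union]
  congr 1
  · exact image_congr fun e he => filter_reachable_union hd he
  · rw [union_comm A B]
    exact image_congr fun e he => filter_reachable_union hd.symm he

end DisjointUnion

lemma comps_eq_singleton_of_isTreeSet {T : Finset (Sym2 V)} (hT : IsTreeSet T) :
    comps T = {T} := by
  unfold comps
  rw [← image_const hT.nonempty T]
  refine image_congr fun e he => filter_true_of_mem fun e' he' => ?_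
  exact ⟨_, e.out_fst_mem, _, e'.out_fst_mem, hT.reachable (mem_verts_of_mem he e.out_fst_mem)
    (mem_verts_of_mem he' e'.out_fst_mem)⟩

lemma subset_of_mem_comps {F C : Finset (Sym2 V)} (h : C ∈ comps F) : C ⊆ F := by
  obtain ⟨e, -, rfl⟩ := mem_image.1 h
  exact filter_subset _ _

lemma prod_comps_union_of_isTreeSet {R : Type*} [CommMonoid R] (w : Finset (Sym2 V) → R)
    {T F : Finset (Sym2 V)} (hT : IsTreeSet T) (hd : Disjoint (verts T) (verts F)) :
    ∏ C ∈ comps (T ∪ F), w C = w T * ∏ C ∈ comps F, w C := by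
  have hTF : T ∉ comps F := fun hmem =>
    let ⟨_, he⟩ := hT.nonempty
    disjoint_left.1 (disjoint_of_disjoint_verts hd) he (subset_of_mem_comps hmem he)
  rw [comps_union hd, comps_eq_singleton_of_isTreeSet hT, ← insert_eq, prod_insert hTF]

noncomputable def compOf (v : V) (F : Finset (Sym2 V)) : Finset (Sym2 V) :=
  F.filter (fun e => ∃ u ∈ e, (fromEdgeSet (F : Set (Sym2 V))).Reachable v u)

section CompOf

variable {v : V} {F : Finset (Sym2 V)}

lemma compOf_subset : compOf v F ⊆ F :=
  filter_subset _ _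

lemma mem_compOf {e : Sym2 V} :
    e ∈ compOf v F ↔ e ∈ F ∧ ∃ u ∈ e, (fromEdgeSet (F : Set (Sym2 V))).Reachable v u :=
  mem_filter

lemma mem_verts_compOf_self (hv : v ∈ verts F) : v ∈ verts (compOf v F) := by
  obtain ⟨e, he, hve⟩ := mem_verts.1 hv
  exact mem_verts_of_mem (mem_compOf.2 ⟨he, v, hve, Reachable.refl v⟩) hve

lemma reachable_of_mem_verts_compOf {a : V} (ha : a ∈ verts (compOf v F)) :
    (fromEdgeSet (F : Set (Sym2 V))).Reachable v a := by
  obtain ⟨e, he, hae⟩ := mem_verts.1 ha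
  obtain ⟨heF, u, hue, hvu⟩ := mem_compOf.1 he
  by_cases hua : u = a
  · exact hua ▸ hvu
  · have hadj : (fromEdgeSet (F : Set (Sym2 V))).Adj u a :=
      (fromEdgeSet_adj _).2 ⟨(Sym2.mem_and_mem_iff hua).1 ⟨hue, hae⟩ ▸ heF, hua⟩
    exact hvu.trans hadj.reachable

lemma disjoint_verts_compOf_sdiff : Disjoint (verts (compOf v F)) (verts (F \ compOf v F)) := by
  refine disjoint_left.2 fun a ha ha' => ?_
  obtain ⟨e, he, hae⟩ := mem_verts.1 ha'
  obtain ⟨heF, heC⟩ := mem_sdiff.1 he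
  exact heC (mem_compOf.2 ⟨heF, a, hae, reachable_of_mem_verts_compOf ha⟩)

lemma edges_mem_edgeSet_compOf {a b : V} (p : (fromEdgeSet (F : Set (Sym2 V))).Walk a b)
    (hva : (fromEdgeSet (F : Set (Sym2 V))).Reachable v a) :
    ∀ e ∈ p.edges, e ∈ (fromEdgeSet (compOf v F : Set (Sym2 V))).edgeSet := by
  induction p with
  | nil => simp
  | @cons a c b h p ih =>
    have hac := (fromEdgeSet_adj _).1 h
    simp only [Walk.edges_cons, List.forall_mem_cons]
    exact ⟨(fromEdgeSet_adj _).2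
        ⟨mem_compOf.2 ⟨hac.1, a, Sym2.mem_mk_left a c, hva⟩, hac.2⟩,
      ih (hva.trans h.reachable)⟩

lemma isTreeSet_compOf (hac : (fromEdgeSet (F : Set (Sym2 V))).IsAcyclic) (hv : v ∈ verts F) :
    IsTreeSet (compOf v F) := by
  refine isTreeSet_of_reachable (mem_verts_compOf_self hv) (fun a ha b hb => ?_)
    (hac.anti (fromEdgeSet_mono (coe_subset.2 compOf_subset)))
  have hva := reachable_of_mem_verts_compOf ha
  obtain ⟨p⟩ := hva.symm.trans (reachable_of_mem_verts_compOf hb)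
  exact ⟨p.transfer _ (edges_mem_edgeSet_compOf p hva)⟩

lemma compOf_union_of_isTreeSet {T : Finset (Sym2 V)} (hT : IsTreeSet T) (hv : v ∈ verts T)
    (hd : Disjoint (verts T) (verts F)) : compOf v (T ∪ F) = T := by
  ext e
  rw [mem_compOf, mem_union]
  constructor
  · rintro ⟨heT | heF, u, hue, hvu⟩
    · exact heT
    · have hu := mem_verts_of_reachable hv (reachable_of_disjoint_verts hd hvu hv)
      exact absurd (mem_verts_of_mem heF hue) (disjoint_left.1 hd hu)
  · intro heT
    exact ⟨Or.inl heT, _, e.out_fst_mem, (hT.reachable hv (mem_verts_of_mem heT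
      e.out_fst_mem)).mono (fromEdgeSet_mono (by simp))⟩

end CompOf

section Forests

variable {G : SimpleGraph V} {S : Finset V} {F : Finset (Sym2 V)}

lemma verts_subset_iff : verts F ⊆ S ↔ ∀ e ∈ F, ∀ v ∈ e, v ∈ S := by
  simp only [subset_iff, mem_verts]
  exact ⟨fun h e he v hv => h ⟨e, he, hv⟩, fun h v ⟨e, he, hve⟩ => h e he v hve⟩

lemma isForestOn_iff : IsForestOn G S F ↔
    (F : Set (Sym2 V)) ⊆ G.edgeSet ∧ verts F ⊆ S ∧
      (fromEdgeSet (F : Set (Sym2 V))).IsAcyclic := by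
  rw [IsForestOn, verts_subset_iff]

lemma isForestOn_erase_iff {v : V} :
    IsForestOn G (S.erase v) F ↔ IsForestOn G S F ∧ v ∉ verts F := by
  simp only [isForestOn_iff, subset_erase]
  tauto

lemma isForestOn_sdiff_iff {U : Finset V} :
    IsForestOn G (S \ U) F ↔ IsForestOn G S F ∧ Disjoint (verts F) U := by
  simp only [isForestOn_iff, subset_sdiff]
  tauto

lemma IsForestOn.union_of_isTreeSet {T : Finset (Sym2 V)} (hF : IsForestOn G S F)
    (hTG : (T : Set (Sym2 V)) ⊆ G.edgeSet) (hT : IsTreeSet T) (hTS : verts T ⊆ S)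
    (hd : Disjoint (verts T) (verts F)) : IsForestOn G S (T ∪ F) := by
  obtain ⟨hFG, hFS, hFac⟩ := isForestOn_iff.1 hF
  refine isForestOn_iff.2 ⟨?_, ?_, isAcyclic_union hd hT.isAcyclic hFac⟩
  · rw [coe_union]
    exact Set.union_subset hTG hFG
  · rw [verts_union]
    exact union_subset hTS hFS

lemma IsForestOn.split_compOf {v : V} (hF : IsForestOn G S F) (hv : v ∈ verts F) :
    ((compOf v F : Set (Sym2 V)) ⊆ G.edgeSet ∧ IsTreeSet (compOf v F) ∧
      v ∈ verts (compOf v F) ∧ verts (compOf v F) ⊆ S) ∧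
    IsForestOn G (S \ verts (compOf v F)) (F \ compOf v F) := by
  obtain ⟨hFG, hFS, hFac⟩ := isForestOn_iff.1 hF
  refine ⟨⟨fun e he => hFG (compOf_subset he), isTreeSet_compOf hFac hv,
    mem_verts_compOf_self hv, (verts_mono compOf_subset).trans hFS⟩,
    isForestOn_sdiff_iff.2
      ⟨isForestOn_iff.2 ⟨?_, ?_, ?_⟩, disjoint_verts_compOf_sdiff.symm⟩⟩
  · exact fun e he => hFG (mem_sdiff.1 he).1
  · exact (verts_mono sdiff_subset).trans hFS
  · exact hFac.anti (fromEdgeSet_mono (coe_subset.2 sdiff_subset))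

end Forests

noncomputable def forestSum {R : Type*} [CommSemiring R] (G : SimpleGraph V) (S : Finset V)
    (w : Finset (Sym2 V) → R) (x : R) : R :=
  ∑ F ∈ univ.filter (fun F => IsForestOn G S F), (∏ C ∈ comps F, w C) * x ^ F.card

section ForestSum

variable {R : Type*} [CommSemiring R] (G : SimpleGraph V) (S : Finset V)
  (w : Finset (Sym2 V) → R) (x : R) (v : V)

lemma sum_forests_not_mem_verts :
    ∑ F ∈ univ.filter (fun F => IsForestOn G S F ∧ v ∉ verts F),
      (∏ C ∈ comps F, w C) * x ^ F.card = forestSum G (S.erase v) w x := by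
  simp only [forestSum, isForestOn_erase_iff]

lemma sum_forests_mem_verts :
    ∑ F ∈ univ.filter (fun F => IsForestOn G S F ∧ v ∈ verts F),
      (∏ C ∈ comps F, w C) * x ^ F.card =
    ∑ T ∈ univ.filter (fun T : Finset (Sym2 V) =>
        (T : Set (Sym2 V)) ⊆ G.edgeSet ∧ IsTreeSet T ∧ v ∈ verts T ∧ verts T ⊆ S),
      x ^ T.card * w T * forestSum G (S \ verts T) w x := by
  simp only [forestSum, mul_sum]
  rw [sum_sigma']
  symm
  refine sum_nbij' (fun p => p.1 ∪ p.2) (fun F => ⟨compOf v F, F \ compOf v F⟩)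
    ?_ ?_ ?_ ?_ ?_
  all_goals simp only [mem_sigma, mem_filter, mem_univ, true_and, isForestOn_sdiff_iff]
  · rintro ⟨T, F⟩ ⟨⟨hTG, hT, hvT, hTS⟩, hF, hd⟩
    exact ⟨hF.union_of_isTreeSet hTG hT hTS hd.symm, verts_union T F ▸ mem_union_left _ hvT⟩
  · rintro F ⟨hF, hv⟩
    obtain ⟨hC, hF'⟩ := hF.split_compOf hv
    exact ⟨hC, isForestOn_sdiff_iff.1 hF'⟩
  · rintro ⟨T, F⟩ ⟨⟨-, hT, hvT, -⟩, -, hd⟩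
    rw [compOf_union_of_isTreeSet hT hvT hd.symm,
      union_sdiff_cancel_left (disjoint_of_disjoint_verts hd.symm)]
  · exact fun F _ => union_sdiff_of_subset compOf_subset
  · rintro ⟨T, F⟩ ⟨⟨-, hT, -, -⟩, -, hd⟩
    rw [prod_comps_union_of_isTreeSet w hT hd.symm,
      card_union_of_disjoint (disjoint_of_disjoint_verts hd.symm), pow_add]
    ring

theorem forestSum_eq_erase_add :
    forestSum G S w x = forestSum G (S.erase v) w x +
      ∑ T ∈ univ.filter (fun T : Finset (Sym2 V) =>
          (T : Set (Sym2 V)) ⊆ G.edgeSet ∧ IsTreeSet T ∧ v ∈ verts T ∧ verts T ⊆ S),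
        x ^ T.card * w T * forestSum G (S \ verts T) w x := by
  rw [← sum_forests_not_mem_verts, ← sum_forests_mem_verts, forestSum,
    ← sum_filter_not_add_sum_filter _ (fun F => v ∈ verts F), filter_filter, filter_filter]

end ForestSum

lemma eval_pPolyOn (G : SimpleGraph V) (ord : Sym2 V → ℕ) (δ : ℝ) (S : Finset V) (x : ℂ) :
    (pPolyOn G ord δ S).eval x = forestSum G S (fun T => (treeWeight G ord δ T : ℂ)) x := by
  simp only [pPolyOn, forestSum, Polynomial.eval_finsetSum, Polynomial.eval_monomial,
    Complex.ofReal_prod]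

theorem statement11_general (V : Type) [Fintype V] (G : SimpleGraph V) (ord : Sym2 V → ℕ)
    (δ : ℝ) (v : V) (x : ℂ) :
    Polynomial.eval x (pPolyOn G ord δ Finset.univ) =
      Polynomial.eval x (pPolyOn G ord δ (Finset.univ.erase v)) +
      ∑ T ∈ Finset.univ.filter (fun T : Finset (Sym2 V) =>
          (↑T : Set (Sym2 V)) ⊆ G.edgeSet ∧ IsTreeSet T ∧ v ∈ verts T),
        x ^ T.card * (treeWeight G ord δ T : ℂ) *
          Polynomial.eval x (pPolyOn G ord δ (Finset.univ \ verts T)) := by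
  simp only [eval_pPolyOn]
  rw [forestSum_eq_erase_add G univ _ x v]
  congr 1
  refine sum_congr (filter_congr fun T _ => ?_) fun _ _ => rfl
  simp only [subset_univ, and_true]

/-- The deletion recursion: for every vertex `v` and complex `x`,
`p_{G,δ}(x) = p_{G−v,δ}(x) + ∑_T x^{|T|} w_T p_{G∖V(T),δ}(x)`, the sum being over all
edge sets `T ⊆ E(G)` forming a tree (with at least one edge) whose vertex set
contains `v`. -/
theorem statement11 (V : Type) [Fintype V] (G : SimpleGraph V) (ord : Sym2 V → ℕ)
    (hord : Function.Injective ord) (δ : ℝ) (hδ : δ ∈ Set.Ioo (0:ℝ) (1/2))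
    (v : V) (x : ℂ) :
    Polynomial.eval x (pPolyOn G ord δ Finset.univ) =
      Polynomial.eval x (pPolyOn G ord δ (Finset.univ.erase v)) +
      ∑ T ∈ Finset.univ.filter (fun T : Finset (Sym2 V) =>
          (↑T : Set (Sym2 V)) ⊆ G.edgeSet ∧ IsTreeSet T ∧ v ∈ verts T),
        x ^ T.card * (treeWeight G ord δ T : ℂ) *
          Polynomial.eval x (pPolyOn G ord δ (Finset.univ \ verts T)) :=
  statement11_general V G ord δ v x

end VolumePaper
end
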